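/- Let g = gl_N with nilpotent f of partition type p_1^{r_1}⋯p_s^{r_s} (p_1 > ⋯ > p_s), F the corresponding nilpotent endomorphism of V = F^N acting as left shift in the pyramid basis, F^t the right shift, V_± as above, and r = ∑ r_i. Define U^⊥ = 1_{F^t V}·End(V) ⊕ 1_{V_−}·(End V)[>0], where (End V)[>0] is the positively graded part with respect to the right-aligned good grading. Then dim(U^⊥) = N(N−r) + ∑_{i<j} r_i r_j (p_i − p_j), and U^⊥ is a complement to the centralizer g^f in g, i.e. g = g^f ⊕ U^⊥. -/

import Mathlib

/-- A "box" of the pyramid attached to the partition `p₁^{r₁} ⋯ p_s^{r_s}`. The last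
coordinate is the position of the box in its row, counted from the right
(`0` = rightmost box); so in the right-aligned pyramid the `x`-coordinate of a box is
the negative of its last coordinate, and a box is leftmost iff its position `+ 1` equals
the length of its row. -/
abbrev PyramidBox {s : ℕ} (p r : Fin s → ℕ) : Type := (i : Fin s) × (Fin (r i) × Fin (p i))

/-- The elementary endomorphism `E_{x,y}` sending the basis vector `b y` to `b x` and all
other basis vectors to `0`. -/
noncomputable def elemEnd {K : Type*} [Field K] {V : Type*} [AddCommGroup V] [Module K V]
    {ι : Type*} (b : Module.Basis ι K V) (x y : ι) : Module.End K V :=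
  (b.coord y).smulRight (b x)

/-- The subspace `U^⊥ = 1_{FᵗV}·End(V) ⊕ 1_{V₋}·(End V)[>0]` of `gl(V)` for the
right-aligned pyramid: it is spanned by the elementary matrices `E_{x,y}` such that either
`x` is not a leftmost box (these span `1_{FᵗV} End V`), or `x` is a leftmost box and the
arrow from `y` to `x` has strictly positive degree, i.e. `y` is strictly to the left of `x`
(these span `1_{V₋}(End V)[>0]`). -/
noncomputable def Uperp {K : Type*} [Field K] {V : Type*} [AddCommGroup V] [Module K V]
    {s : ℕ} (p r : Fin s → ℕ) (b : Module.Basis (PyramidBox p r) K V) :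
    Submodule K (Module.End K V) :=
  Submodule.span K
    {X : Module.End K V | ∃ x y : PyramidBox p r,
      X = elemEnd b x y ∧
        (((x.2.2 : ℕ) + 1 < p x.1) ∨
          ((x.2.2 : ℕ) + 1 = p x.1 ∧ (x.2.2 : ℕ) < (y.2.2 : ℕ)))}

/-!
The elementary endomorphisms `E_{x,y}` form a basis of `End V`, and `U^⊥` is spanned by part of
it: the `E_{x,y}` with `x` one of the `N - r` boxes that are not leftmost and `y` arbitrary, and
those with `x` leftmost in a row of length `pᵢ` and `y` one of the `∑ⱼ rⱼ (pⱼ - pᵢ)` boxes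
strictly to its left (only rows `j < i` contribute).

An endomorphism `A` commuting with `F` is determined by the vectors `v = A (b y₀)`, `y₀` the
rightmost box of a row of length `p`, and these satisfy `F^p v = 0`. If `A` also lies in `U^⊥`,
the coordinates of `v` near the left end of each row are leftmost coordinates of some `A (b y)`,
hence zero, and the remaining ones vanish because `F^p v = 0`; so `A = 0`. Conversely, for a
leftmost `x` and `y` not strictly to its left, the `F`-equivariant map sending the row of `y`
into the row of `x` with `y ↦ x` (and the other rows to `0`) is congruent to `E_{x,y}` modulo
`U^⊥`.
-/

open Module Finset

lemma Module.Basis.end_apply_eq_elemEnd {K V ι : Type*} [Field K] [AddCommGroup V] [Module K V]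
    [Fintype ι] [DecidableEq ι] (b : Basis ι K V) (x y : ι) : b.end (x, y) = elemEnd b x y := by
  refine b.ext fun z => ?_
  simp [Basis.end_apply_apply, elemEnd, Finsupp.single_apply, eq_comm]

lemma Module.Basis.end_repr_apply_apply {R M ι : Type*} [CommSemiring R] [AddCommMonoid M]
    [Module R M] [Fintype ι] [DecidableEq ι] (b : Basis ι R M) (A : Module.End R M) (x y : ι) :
    b.end.repr A (x, y) = b.repr (A (b y)) x := by
  simp [Matrix.stdBasis, LinearMap.toMatrix_apply]

lemma LinearMap.mem_ker_mulLeft_sub_mulRight {K A : Type*} [CommRing K] [Ring A] [Algebra K A]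
    (a c : A) : c ∈ ker (mulLeft K a - mulRight K a) ↔ Commute a c := by
  simp [sub_eq_zero, Commute, SemiconjBy]

lemma Fin.card_filter_lt_val (n m : ℕ) : #{k : Fin n | m < (k : ℕ)} = n - (m + 1) := by
  have := card_filter_add_card_filter_not (s := univ) (fun k : Fin n => (k : ℕ) < m + 1)
  simp only [Fin.card_filter_val_lt, card_univ, Fintype.card_fin, not_lt, Nat.succ_le_iff] at this
  omega

lemma Fin.sum_ite_add_one_lt (n N c : ℕ) (hn : 0 < n) :
    (∑ k : Fin n, if (k : ℕ) + 1 < n then N else c) = (n - 1) * N + c := by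
  obtain ⟨n, rfl⟩ : ∃ m, n = m + 1 := ⟨n - 1, by omega⟩
  simp [Fin.sum_univ_castSucc]

lemma Finset.sum_mul_tsub_one {ι : Type*} [Fintype ι] {a b : ι → ℕ} (hb : ∀ i, 0 < b i) :
    ∑ i, a i * (b i - 1) = ∑ i, a i * b i - ∑ i, a i := by
  have : ∑ i, a i * (b i - 1) + ∑ i, a i = ∑ i, a i * b i := by
    rw [← sum_add_distrib]
    refine sum_congr rfl fun i _ => ?_
    rw [← Nat.mul_add_one, Nat.sub_add_cancel (hb i)]
  omega

lemma Finset.sum_sum_mul_tsub_of_antitone {ι : Type*} [Fintype ι] [LinearOrder ι] {a b : ι → ℕ}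
    (hb : Antitone b) :
    ∑ i, ∑ j, a i * a j * (b j - b i) = ∑ i, ∑ j, if i < j then a i * a j * (b i - b j) else 0 := by
  rw [sum_comm]
  refine sum_congr rfl fun i _ => sum_congr rfl fun j _ => ?_
  split_ifs with hij
  · ring
  · rw [Nat.sub_eq_zero_of_le (hb (not_lt.mp hij)), mul_zero]

section Pyramid

variable {K V : Type*} [Field K] [AddCommGroup V] [Module K V] {s : ℕ} {p r : Fin s → ℕ}

def UperpIndex (p r : Fin s → ℕ) : Finset (PyramidBox p r × PyramidBox p r) :=
  {z | (z.1.2.2 : ℕ) + 1 < p z.1.1 ∨ ((z.1.2.2 : ℕ) + 1 = p z.1.1 ∧ (z.1.2.2 : ℕ) < z.2.2.2)}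

lemma Uperp_eq_span_image (b : Basis (PyramidBox p r) K V) :
    Uperp p r b = Submodule.span K (b.end '' UperpIndex p r) := by
  rw [Uperp]
  congr 1
  ext X
  simp only [UperpIndex, Set.mem_ofPred_eq, Set.mem_image, coe_filter, mem_univ, true_and,
    Prod.exists, Basis.end_apply_eq_elemEnd]
  grind

lemma finrank_Uperp (b : Basis (PyramidBox p r) K V) :
    finrank K (Uperp p r b) = #(UperpIndex p r) := by
  rw [Uperp_eq_span_image, Set.image_eq_range]
  exact (finrank_span_eq_card (b.end.linearIndependent.comp _ Subtype.val_injective)).trans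
    (by simp)

lemma mem_Uperp_iff (b : Basis (PyramidBox p r) K V) (A : Module.End K V) :
    A ∈ Uperp p r b ↔ ∀ x y : PyramidBox p r, (x.2.2 : ℕ) + 1 = p x.1 → (y.2.2 : ℕ) ≤ x.2.2 →
      b.repr (A (b y)) x = 0 := by
  simp only [Uperp_eq_span_image, Basis.mem_span_image, Set.subset_def, Finset.mem_coe,
    Finsupp.mem_support_iff, Prod.forall, Basis.end_repr_apply_apply, UperpIndex, mem_filter,
    mem_univ, true_and]
  refine forall₂_congr fun x y => ⟨fun h hx hy => ?_, fun h hne => ?_⟩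
  · by_contra hne
    have := h hne
    omega
  · by_contra hc
    exact hne (h (by omega) (by omega))

lemma PyramidBox.card : Fintype.card (PyramidBox p r) = ∑ i, r i * p i := by
  simp [Fintype.card_sigma]

lemma PyramidBox.card_filter_lt_position (m : ℕ) :
    #{y : PyramidBox p r | m < (y.2.2 : ℕ)} = ∑ j, r j * (p j - (m + 1)) := by
  rw [card_filter, Fintype.sum_sigma]
  refine sum_congr rfl fun j _ => ?_
  rw [Fintype.sum_prod_type, ← Fin.card_filter_lt_val, card_filter]
  simp

lemma card_UperpIndex (hp : StrictAnti p) (hp0 : ∀ i, 0 < p i) :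
    #(UperpIndex p r) = (∑ i, r i * p i) * ((∑ i, r i * p i) - ∑ i, r i)
      + ∑ i : Fin s, ∑ j : Fin s, (if i < j then r i * r j * (p i - p j) else 0) := by
  have hrow (x : PyramidBox p r) : #{y | (x, y) ∈ UperpIndex p r} =
      if (x.2.2 : ℕ) + 1 < p x.1 then Fintype.card (PyramidBox p r)
      else ∑ j, r j * (p j - p x.1) := by
    split_ifs with hx
    · rw [filter_true_of_mem fun y _ => by simp [UperpIndex, hx], card_univ]
    · have hx' : (x.2.2 : ℕ) + 1 = p x.1 := by omega
      rw [← hx', ← PyramidBox.card_filter_lt_position]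
      simp [UperpIndex, hx']
  calc #(UperpIndex p r) = ∑ x, #{y | (x, y) ∈ UperpIndex p r} := by
        simp only [card_filter]
        rw [← Fintype.sum_prod_type', sum_boole]
        simp
    _ = ∑ i, r i * ((p i - 1) * Fintype.card (PyramidBox p r) + ∑ j, r j * (p j - p i)) := by
        simp only [hrow, Fintype.sum_sigma, Fintype.sum_prod_type,
          Fin.sum_ite_add_one_lt _ _ _ (hp0 _), sum_const, card_univ, Fintype.card_fin, smul_eq_mul]
    _ = (∑ i, r i * (p i - 1)) * Fintype.card (PyramidBox p r)
          + ∑ i, ∑ j, r i * r j * (p j - p i) := by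
        rw [sum_mul, ← sum_add_distrib]
        refine sum_congr rfl fun i _ => ?_
        rw [mul_add, mul_sum]
        simp only [mul_assoc]
    _ = _ := by
        rw [sum_mul_tsub_one hp0, sum_sum_mul_tsub_of_antitone hp.antitone, PyramidBox.card]
        ring

def IsPyramidShift (b : Basis (PyramidBox p r) K V) (F : Module.End K V) : Prop :=
  ∀ x : PyramidBox p r, F (b x) = if h : (x.2.2 : ℕ) + 1 < p x.1
    then b ⟨x.1, x.2.1, ⟨(x.2.2 : ℕ) + 1, h⟩⟩ else 0

namespace IsPyramidShift

variable {b : Basis (PyramidBox p r) K V} {F : Module.End K V}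

lemma pow_apply (hF : IsPyramidShift b F) (n : ℕ) (x : PyramidBox p r) :
    (F ^ n) (b x) = if h : (x.2.2 : ℕ) + n < p x.1
      then b ⟨x.1, x.2.1, ⟨(x.2.2 : ℕ) + n, h⟩⟩ else 0 := by
  induction n with
  | zero => simp
  | succ n ih =>
    rw [pow_succ', Module.End.mul_apply, ih]
    split_ifs with h₁ h₂ h₂
    · exact hF _ |>.trans (dif_pos h₂)
    · rw [hF, dif_neg (by omega)]
    · omega
    · exact map_zero F

lemma repr_pow_apply (hF : IsPyramidShift b F) (n : ℕ) (v : V) (i : Fin s) (a : Fin (r i))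
    (k : ℕ) (hk : k + n < p i) :
    b.repr ((F ^ n) v) ⟨i, a, ⟨k + n, hk⟩⟩ = b.repr v ⟨i, a, ⟨k, by omega⟩⟩ := by
  suffices (b.coord ⟨i, a, ⟨k + n, hk⟩⟩).comp (F ^ n) = b.coord ⟨i, a, ⟨k, by omega⟩⟩ from
    LinearMap.congr_fun this v
  refine b.ext fun ⟨j, c, m⟩ => ?_
  rw [LinearMap.comp_apply, hF.pow_apply]
  rcases eq_or_ne j i with rfl | hji
  · split_ifs with h
    · simp [Finsupp.single_apply, Fin.ext_iff]
    · simp only at h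
      simp [Finsupp.single_apply, Fin.ext_iff]
      omega
  · split_ifs <;> simp [hji]

lemma eq_zero_of_commute (hF : IsPyramidShift b F) {A : Module.End K V} (hA : Commute F A)
    (h0 : ∀ x y : PyramidBox p r, (x.2.2 : ℕ) + 1 = p x.1 → (y.2.2 : ℕ) ≤ x.2.2 →
      b.repr (A (b y)) x = 0) : A = 0 := by
  have hApow (n : ℕ) (v : V) : A ((F ^ n) v) = (F ^ n) (A v) :=
    (LinearMap.congr_fun (hA.pow_left n).eq v).symm
  refine b.ext fun ⟨j, c, ⟨l, hl⟩⟩ => ?_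
  have hj : 0 < p j := by omega
  set v := A (b ⟨j, c, ⟨0, hj⟩⟩)
  have hgen (m : ℕ) (hm : m < p j) : A (b ⟨j, c, ⟨m, hm⟩⟩) = (F ^ m) v := by
    rw [← hApow, hF.pow_apply, dif_pos (by simpa using hm)]
    simp
  have hv : v = 0 := by
    refine b.ext_elem fun ⟨i, a, ⟨k, hk⟩⟩ => ?_
    rw [map_zero, Finsupp.zero_apply]
    by_cases hkj : k + p j < p i
    · have hFv : (F ^ p j) v = 0 := by
        rw [← hApow, hF.pow_apply, dif_neg (by simp), map_zero]
      rw [← hF.repr_pow_apply (p j) v i a k hkj, hFv, map_zero, Finsupp.zero_apply]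
    · rw [← hF.repr_pow_apply (p i - 1 - k) v i a k (by omega), ← hgen _ (by omega)]
      exact h0 _ _ (by simp; omega) (by simp)
  rw [LinearMap.zero_apply, hgen l hl, hv, map_zero]

lemma commute_constr (hF : IsPyramidShift b F) (u : (i : Fin s) × Fin (r i) → V)
    (hu : ∀ ρ, (F ^ p ρ.1) (u ρ) = 0) :
    Commute F (b.constr K fun y => (F ^ (y.2.2 : ℕ)) (u ⟨y.1, y.2.1⟩)) := by
  show F * _ = _ * F
  refine b.ext fun y => ?_
  rw [Module.End.mul_apply, Module.End.mul_apply, hF, b.constr_basis]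
  split_ifs with h
  · rw [b.constr_basis, pow_succ', Module.End.mul_apply]
  · rw [map_zero, ← Module.End.mul_apply, ← pow_succ', show (y.2.2 : ℕ) + 1 = p y.1 by omega]
    exact hu ⟨y.1, y.2.1⟩

lemma exists_commute_sub_mem_Uperp (hF : IsPyramidShift b F) (x y : PyramidBox p r)
    (hx : (x.2.2 : ℕ) + 1 = p x.1) (hyx : (y.2.2 : ℕ) ≤ x.2.2) :
    ∃ C, Commute F C ∧ C - b.end (x, y) ∈ Uperp p r b := by
  classical
  obtain ⟨i, a, ⟨k, hk⟩⟩ := x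
  obtain ⟨j, c, ⟨l, hl⟩⟩ := y
  simp only at hx hyx
  set w := b ⟨i, a, ⟨k - l, by omega⟩⟩
  have hw : (F ^ p j) w = 0 := by rw [hF.pow_apply, dif_neg (by simp; omega)]
  refine ⟨_, hF.commute_constr (Pi.single ⟨j, c⟩ w) ?_, ?_⟩
  · intro ρ
    by_cases hρ : ρ = ⟨j, c⟩
    · subst hρ; simpa using hw
    · simp [Pi.single_eq_of_ne hρ]
  rw [mem_Uperp_iff]
  rintro x' ⟨j', c', ⟨m, hm⟩⟩ hx' -
  by_cases hρ : (⟨j', c'⟩ : (i : Fin s) × Fin (r i)) = ⟨j, c⟩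
  · obtain ⟨rfl, hc⟩ := Sigma.mk.inj_iff.mp hρ
    obtain rfl := eq_of_heq hc
    simp only [LinearMap.sub_apply, Basis.constr_basis, Pi.single_eq_same, Basis.end_apply_apply]
    rcases eq_or_ne m l with rfl | hml
    · rw [if_pos rfl, hF.pow_apply, dif_pos (by simp; omega)]
      simp [show k - m + m = k by omega]
    · rw [if_neg (by simp [Fin.ext_iff, hml.symm]), sub_zero, hF.pow_apply]
      split_ifs with h
      · rw [b.repr_self, Finsupp.single_apply, if_neg]
        rintro rfl
        simp only at h hx'
        omega
      · simp
  · simp only [LinearMap.sub_apply, Basis.constr_basis, Pi.single_eq_of_ne hρ, map_zero,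
      Basis.end_apply_apply]
    rw [if_neg fun h => hρ (by cases h; rfl)]
    simp

lemma isCompl_ker_Uperp (hF : IsPyramidShift b F) :
    IsCompl (LinearMap.ker (LinearMap.mulLeft K F - LinearMap.mulRight K F)) (Uperp p r b) where
  disjoint := Submodule.disjoint_def.mpr fun A hA hU =>
    hF.eq_zero_of_commute ((LinearMap.mem_ker_mulLeft_sub_mulRight F A).mp hA)
      ((mem_Uperp_iff b A).mp hU)
  codisjoint := by
    rw [codisjoint_iff, eq_top_iff, ← b.end.span_eq, Submodule.span_le]
    rintro _ ⟨⟨x, y⟩, rfl⟩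
    by_cases hxy : (x.2.2 : ℕ) + 1 = p x.1 ∧ (y.2.2 : ℕ) ≤ x.2.2
    · obtain ⟨C, hC, hCU⟩ := hF.exists_commute_sub_mem_Uperp x y hxy.1 hxy.2
      rw [← sub_sub_cancel C (b.end (x, y))]
      exact Submodule.sub_mem _
        (Submodule.mem_sup_left ((LinearMap.mem_ker_mulLeft_sub_mulRight F C).mpr hC))
        (Submodule.mem_sup_right hCU)
    · refine Submodule.mem_sup_right ?_
      rw [Uperp_eq_span_image]
      exact Submodule.subset_span ⟨(x, y), by simp [UperpIndex]; omega, rfl⟩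

end IsPyramidShift

end Pyramid

theorem stmt13_general {K : Type*} [Field K]
    {V : Type*} [AddCommGroup V] [Module K V]
    {s : ℕ} (p r : Fin s → ℕ) (hp : StrictAnti p) (hp0 : ∀ i, 0 < p i)
    (b : Module.Basis (PyramidBox p r) K V)
    (F : Module.End K V)
    (hF : ∀ x : PyramidBox p r,
      F (b x) = if h : (x.2.2 : ℕ) + 1 < p x.1
        then b ⟨x.1, x.2.1, ⟨(x.2.2 : ℕ) + 1, h⟩⟩ else 0) :
    Module.finrank K ↥(Uperp p r b)
        = (∑ i, r i * p i) * ((∑ i, r i * p i) - ∑ i, r i)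
          + ∑ i : Fin s, ∑ j : Fin s, (if i < j then r i * r j * (p i - p j) else 0)
    ∧ IsCompl (LinearMap.ker (LinearMap.mulLeft K F - LinearMap.mulRight K F))
        (Uperp p r b) :=
  ⟨(finrank_Uperp b).trans (card_UperpIndex hp hp0), IsPyramidShift.isCompl_ker_Uperp hF⟩

/-- for `g = gl_N` with nilpotent `f` of partition type `p₁^{r₁} ⋯ p_s^{r_s}`
(`N = ∑ rᵢ pᵢ`, `r = ∑ rᵢ`), the subspace
`U^⊥ = 1_{FᵗV}·End(V) ⊕ 1_{V₋}·(End V)[>0]` satisfies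
`dim U^⊥ = N(N - r) + ∑_{i<j} rᵢ rⱼ (pᵢ - pⱼ)`, and `U^⊥` is a complement to the
centralizer `g^f = {A | AF = FA}` in `g`. -/
theorem stmt13 {K : Type*} [Field K] [CharZero K]
    {V : Type*} [AddCommGroup V] [Module K V]
    {s : ℕ} (p r : Fin s → ℕ) (hp : StrictAnti p) (hp0 : ∀ i, 0 < p i) (hr : ∀ i, 0 < r i)
    (b : Module.Basis (PyramidBox p r) K V)
    (F : Module.End K V)
    (hF : ∀ x : PyramidBox p r,
      F (b x) = if h : (x.2.2 : ℕ) + 1 < p x.1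
        then b ⟨x.1, x.2.1, ⟨(x.2.2 : ℕ) + 1, h⟩⟩ else 0) :
    Module.finrank K ↥(Uperp p r b)
        = (∑ i, r i * p i) * ((∑ i, r i * p i) - ∑ i, r i)
          + ∑ i : Fin s, ∑ j : Fin s, (if i < j then r i * r j * (p i - p j) else 0)
    ∧ IsCompl (LinearMap.ker (LinearMap.mulLeft K F - LinearMap.mulRight K F))
        (Uperp p r b) :=
  stmt13_general p r hp hp0 b F hF
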